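/- arXiv:2605.03627 — 4 statements merged into one kernel-verified Lean document; each statement's English description precedes it below -/
import Mathlib

section
/- Let d ≥ 1, T > 0, p₀ > 1, C_V ≥ 1. Let V : ℝ^d → [0,∞) be continuously differentiable with |∇V(x)|^{p₀} ≤ C_V(1+V(x)) for all x ∈ ℝ^d and with V(x) → ∞ as |x| → ∞. Let (ρ_n)_{n∈ℕ} and ρ be integrable functions on (0,T)×ℝ^d such that: (i) for every bounded measurable ψ : (0,T)×ℝ^d → ℝ, ∫_0^T∫_{ℝ^d} ρ_n ψ dx dt → ∫_0^T∫_{ℝ^d} ρ ψ dx dt; (ii) sup_n ∫_0^T∫_{ℝ^d} |ρ_n| V dx dt < ∞ and ∫_0^T∫_{ℝ^d} |ρ| V dx dt < ∞; (iii) the functions ρ_n ∇V and ρ ∇V are integrable on (0,T)×ℝ^d. Then for every bounded measurable vector field ψ : (0,T)×ℝ^d → ℝ^d, ∫_0^T∫_{ℝ^d} ρ_n ∇V·ψ dx dt → ∫_0^T∫_{ℝ^d} ρ ∇V·ψ dx dt as n → ∞. -/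
/-!
The growth bound `|∇V|^{p₀} ≤ C_V (1 + V)` with `p₀ > 1` makes `∇V` sublinear in `V`: for every
`δ > 0` there is `B` with `|∇V| ≤ B + δ V`. Clamping `g = ∇V · ψ` to `[-B, B]` then changes it by
at most `δ V`, so the uniform bound on `∫∫ |ρ_n| V` makes this error uniformly small in `n`,
while the clamped test function is bounded and measurable, so weak convergence applies to it.
-/

open MeasureTheory Filter

open scoped Topology

def SublinearlyDominated {α : Type*} (g W : α → ℝ) : Prop :=
  ∀ δ > 0, ∃ B, ∀ z, |g z| ≤ B + δ * W z

lemma eventually_mul_one_add_le_rpow {p : ℝ} (hp : 1 < p) (C : ℝ) {δ : ℝ} (hδ : 0 < δ) :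
    ∀ᶠ v in atTop, C * (1 + v) ≤ (δ * v) ^ p := by
  have hpow : Tendsto (fun v : ℝ => v ^ (p - 1)) atTop atTop := tendsto_rpow_atTop (by linarith)
  filter_upwards [hpow.eventually_ge_atTop (2 * |C| / δ ^ p), eventually_ge_atTop 1]
    with v hv hv1
  have hv0 : 0 < v := by linarith
  calc C * (1 + v) ≤ |C| * (v + v) := by
        nlinarith [le_abs_self C, abs_nonneg C]
    _ = δ ^ p * (2 * |C| / δ ^ p) * v := by field_simp; ring
    _ ≤ δ ^ p * v ^ (p - 1) * v := by gcongr
    _ = (δ * v) ^ p := by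
        rw [Real.mul_rpow hδ.le hv0.le, Real.rpow_sub_one hv0.ne']
        field_simp

lemma abs_sub_clamp_le {x B e : ℝ} (h : |x| ≤ B + e) (he : 0 ≤ e) :
    |x - max (-B) (min x B)| ≤ e := by
  rw [abs_le] at h ⊢
  rcases min_cases x B with ⟨hmin, _⟩ | ⟨hmin, _⟩ <;> rw [hmin] <;>
    rcases max_cases (-B) (min x B) with ⟨hmax, _⟩ | ⟨hmax, _⟩ <;> rw [hmin] at hmax <;>
    rw [hmax] <;> constructor <;> linarith

lemma abs_clamp_le (x B : ℝ) : |max (-B) (min x B)| ≤ |B| := by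
  rw [abs_le]
  constructor
  · exact (neg_le_neg (le_abs_self B)).trans (le_max_left _ _)
  · exact max_le (neg_le_abs B) ((min_le_right _ _).trans (le_abs_self B))

namespace SublinearlyDominated

variable {α : Type*} {g u W : α → ℝ}

theorem of_rpow_le {p C : ℝ} (hp : 1 < p) (hW : ∀ z, 0 ≤ W z)
    (h : ∀ z, |u z| ^ p ≤ C * (1 + W z)) : SublinearlyDominated u W := by
  intro δ hδ
  have hp0 : 0 < p := by linarith
  obtain ⟨R, hR⟩ := (eventually_mul_one_add_le_rpow hp C hδ).exists_forall_of_atTop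
  refine ⟨(|C| * (1 + |R|)) ^ p⁻¹, fun z => ?_⟩
  have hB : 0 ≤ (|C| * (1 + |R|)) ^ p⁻¹ := by positivity
  have hδW : 0 ≤ δ * W z := mul_nonneg hδ.le (hW z)
  rcases le_total R (W z) with hRW | hWR
  · have : |u z| ≤ δ * W z :=
      (Real.rpow_le_rpow_iff (abs_nonneg _) hδW hp0).1 ((h z).trans (hR _ hRW))
    linarith
  · have : |u z| ≤ (|C| * (1 + |R|)) ^ p⁻¹ := by
      refine (Real.le_rpow_inv_iff_of_pos (abs_nonneg _) (by positivity) hp0).2 ((h z).trans ?_)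
      have hWz := hW z
      calc C * (1 + W z) ≤ |C| * (1 + W z) := by gcongr; exact le_abs_self C
        _ ≤ |C| * (1 + |R|) := by gcongr; linarith [le_abs_self R]
    linarith

theorem of_abs_le_mul {c : ℝ} (hu : SublinearlyDominated u W) (hW : ∀ z, 0 ≤ W z)
    (hc : 0 ≤ c) (hg : ∀ z, |g z| ≤ c * |u z|) : SublinearlyDominated g W := by
  intro δ hδ
  obtain ⟨B, hB⟩ := hu (δ / (c + 1)) (by positivity)
  refine ⟨c * B, fun z => ?_⟩
  have hslope : c * (δ / (c + 1)) ≤ δ := by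
    rw [mul_div_assoc', div_le_iff₀ (by positivity)]
    nlinarith
  calc |g z| ≤ c * (B + δ / (c + 1) * W z) := (hg z).trans (by gcongr; exact hB z)
    _ = c * B + c * (δ / (c + 1)) * W z := by ring
    _ ≤ c * B + δ * W z := by gcongr; exact hW z

theorem exists_bounded_approx [MeasurableSpace α] (hg : SublinearlyDominated g W)
    (hgm : Measurable g) (hW : ∀ z, 0 ≤ W z) {δ : ℝ} (hδ : 0 < δ) :
    ∃ ψ : α → ℝ, Measurable ψ ∧ (∃ M : ℝ, ∀ z, |ψ z| ≤ M) ∧ ∀ z, |g z - ψ z| ≤ δ * W z := by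
  obtain ⟨B, hB⟩ := hg δ hδ
  exact ⟨fun z => max (-B) (min (g z) B), measurable_const.max (hgm.min measurable_const),
    ⟨|B|, fun z => abs_clamp_le _ _⟩, fun z => abs_sub_clamp_le (hB z) (mul_nonneg hδ.le (hW z))⟩

end SublinearlyDominated

section WeakConvergence

variable {α : Type*} [MeasurableSpace α] {μ : Measure α}

lemma abs_integral_mul_sub_le {f g ψ W : α → ℝ} {δ : ℝ}
    (hfg : Integrable (fun z => f z * g z) μ) (hfψ : Integrable (fun z => f z * ψ z) μ)
    (hfW : Integrable (fun z => |f z| * W z) μ) (h : ∀ z, |g z - ψ z| ≤ δ * W z) :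
    |∫ z, f z * g z ∂μ - ∫ z, f z * ψ z ∂μ| ≤ δ * ∫ z, |f z| * W z ∂μ := by
  rw [← integral_sub hfg hfψ, ← integral_const_mul, ← Real.norm_eq_abs]
  refine norm_integral_le_of_norm_le (hfW.const_mul δ) (Eventually.of_forall fun z => ?_)
  calc ‖f z * g z - f z * ψ z‖ = |f z| * |g z - ψ z| := by
        rw [Real.norm_eq_abs, ← mul_sub, abs_mul]
    _ ≤ |f z| * (δ * W z) := by gcongr; exact h z
    _ = δ * (|f z| * W z) := by ring

theorem tendsto_integral_mul_of_sublinearlyDominated {f : ℕ → α → ℝ} {f₀ g W : α → ℝ}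
    (hweak : ∀ ψ : α → ℝ, Measurable ψ → (∃ M : ℝ, ∀ z, |ψ z| ≤ M) →
      Tendsto (fun n => ∫ z, f n z * ψ z ∂μ) atTop (𝓝 (∫ z, f₀ z * ψ z ∂μ)))
    (hgm : Measurable g) (hg : SublinearlyDominated g W) (hW : ∀ z, 0 ≤ W z)
    (hf : ∀ n, Integrable (f n) μ) (hf₀ : Integrable f₀ μ)
    (hfg : ∀ n, Integrable (fun z => f n z * g z) μ)
    (hf₀g : Integrable (fun z => f₀ z * g z) μ)
    (hfW : ∀ n, Integrable (fun z => |f n z| * W z) μ)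
    (hfW_bdd : ∃ M : ℝ, ∀ n, ∫ z, |f n z| * W z ∂μ ≤ M)
    (hf₀W : Integrable (fun z => |f₀ z| * W z) μ) :
    Tendsto (fun n => ∫ z, f n z * g z ∂μ) atTop (𝓝 (∫ z, f₀ z * g z ∂μ)) := by
  obtain ⟨M, hM⟩ := hfW_bdd
  set K := max M (∫ z, |f₀ z| * W z ∂μ)
  rw [Metric.tendsto_atTop]
  intro ε hε
  obtain ⟨δ, hδ, hδK⟩ := exists_pos_mul_lt (by positivity : 0 < ε / 4) K
  obtain ⟨ψ, hψm, ⟨Mψ, hMψ⟩, hgψ⟩ := hg.exists_bounded_approx hgm hW hδ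
  have happrox : ∀ h : α → ℝ, Integrable h μ → Integrable (fun z => h z * g z) μ →
      Integrable (fun z => |h z| * W z) μ → ∫ z, |h z| * W z ∂μ ≤ K →
      |∫ z, h z * g z ∂μ - ∫ z, h z * ψ z ∂μ| < ε / 4 := fun h hh hhg hhW hhK =>
    calc _ ≤ δ * ∫ z, |h z| * W z ∂μ := abs_integral_mul_sub_le hhg
            (hh.mul_bdd hψm.aestronglyMeasurable (Eventually.of_forall hMψ)) hhW hgψ
      _ ≤ K * δ := by rw [mul_comm]; gcongr
      _ < ε / 4 := hδK
  obtain ⟨N, hN⟩ := Metric.tendsto_atTop.1 (hweak ψ hψm ⟨Mψ, hMψ⟩) (ε / 2) (by positivity)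
  refine ⟨N, fun n hn => ?_⟩
  have hfn_approx := happrox _ (hf n) (hfg n) (hfW n) ((hM n).trans (le_max_left _ _))
  have hf₀_approx := happrox _ hf₀ hf₀g hf₀W (le_max_right _ _)
  have hψn := hN n hn
  rw [Real.dist_eq, abs_lt] at hψn ⊢
  rw [abs_lt] at hfn_approx hf₀_approx
  constructor <;> linarith

lemma MeasureTheory.Integrable.inner_of_norm_le {E : Type*} [NormedAddCommGroup E]
    [InnerProductSpace ℝ E] {F ψ : α → E} {M : ℝ} (hF : Integrable F μ) (hψ : AEStronglyMeasurable ψ μ)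
    (hM : ∀ z, ‖ψ z‖ ≤ M) : Integrable (fun z => inner ℝ (F z) (ψ z)) μ := by
  refine (hF.norm.mul_const M).mono (hF.aestronglyMeasurable.inner hψ)
    (Eventually.of_forall fun z => ?_)
  calc ‖inner ℝ (F z) (ψ z)‖ ≤ ‖F z‖ * ‖ψ z‖ := norm_inner_le_norm _ _
    _ ≤ ‖F z‖ * M := by gcongr; exact hM z
    _ ≤ ‖‖F z‖ * M‖ := le_abs_self _

end WeakConvergence

theorem weak_convergence_of_rho_nablaV_general
    (d : ℕ)
    (p₀ C_V : ℝ) (hp₀ : 1 < p₀)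
    (V : EuclideanSpace ℝ (Fin d) → ℝ)
    (hV0 : ∀ x, 0 ≤ V x)
    (hgrad : ∀ x, ‖gradient V x‖ ^ p₀ ≤ C_V * (1 + V x))
    (μ : Measure (ℝ × EuclideanSpace ℝ (Fin d)))
    (ρn : ℕ → ℝ × EuclideanSpace ℝ (Fin d) → ℝ)
    (ρ : ℝ × EuclideanSpace ℝ (Fin d) → ℝ)
    (hρn_int : ∀ n, Integrable (ρn n) μ) (hρ_int : Integrable ρ μ)
    -- (i) weak L¹ convergence
    (hweak : ∀ ψ : ℝ × EuclideanSpace ℝ (Fin d) → ℝ, Measurable ψ →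
      (∃ M : ℝ, ∀ z, |ψ z| ≤ M) →
      Tendsto (fun n => ∫ z, ρn n z * ψ z ∂μ) atTop (nhds (∫ z, ρ z * ψ z ∂μ)))
    -- (ii) uniform bound on ∫∫ |ρ_n| V
    (hρnV_int : ∀ n, Integrable (fun z => |ρn n z| * V z.2) μ)
    (hρnV_bdd : ∃ M : ℝ, ∀ n, ∫ z, |ρn n z| * V z.2 ∂μ ≤ M)
    (hρV_int : Integrable (fun z => |ρ z| * V z.2) μ)
    -- (iii) integrability of ρ_n ∇V and ρ ∇V
    (hρngrad_int : ∀ n, Integrable (fun z => ρn n z • gradient V z.2) μ)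
    (hρgrad_int : Integrable (fun z => ρ z • gradient V z.2) μ) :
    ∀ ψ : ℝ × EuclideanSpace ℝ (Fin d) → EuclideanSpace ℝ (Fin d), Measurable ψ →
      (∃ M : ℝ, ∀ z, ‖ψ z‖ ≤ M) →
      Tendsto (fun n => ∫ z, ρn n z * inner ℝ (gradient V z.2) (ψ z) ∂μ) atTop
        (nhds (∫ z, ρ z * inner ℝ (gradient V z.2) (ψ z) ∂μ)) := by
  rintro ψ hψ ⟨M, hM⟩
  have hV0' : ∀ z : ℝ × EuclideanSpace ℝ (Fin d), 0 ≤ V z.2 := fun z => hV0 z.2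
  have hgradV_small : SublinearlyDominated
      (fun z : ℝ × EuclideanSpace ℝ (Fin d) => ‖gradient V z.2‖) (fun z => V z.2) :=
    .of_rpow_le hp₀ hV0' fun z => by simpa only [abs_norm] using hgrad z.2
  have hinner_small :
      SublinearlyDominated (fun z => inner ℝ (gradient V z.2) (ψ z)) (fun z => V z.2) :=
    hgradV_small.of_abs_le_mul hV0' ((norm_nonneg _).trans (hM 0)) fun z => by
      rw [abs_norm, mul_comm]
      exact (abs_real_inner_le_norm _ _).trans (by gcongr; exact hM z)
  have hinner_int : ∀ f : ℝ × EuclideanSpace ℝ (Fin d) → ℝ,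
      Integrable (fun z => f z • gradient V z.2) μ →
      Integrable (fun z => f z * inner ℝ (gradient V z.2) (ψ z)) μ := fun f hf => by
    simpa only [real_inner_smul_left] using hf.inner_of_norm_le hψ.aestronglyMeasurable hM
  have hgradV_meas : Measurable (gradient V) :=
    (InnerProductSpace.toDual ℝ _).symm.continuous.measurable.comp (measurable_fderiv ℝ V)
  exact tendsto_integral_mul_of_sublinearlyDominated hweak
    ((hgradV_meas.comp measurable_snd).inner hψ) hinner_small hV0'
    hρn_int hρ_int (fun n => hinner_int _ (hρngrad_int n)) (hinner_int _ hρgrad_int)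
    hρnV_int hρnV_bdd hρV_int

/-- Lemma C.4: if `ρ_n ⇀ ρ` weakly in `L¹((0,T)×ℝ^d)`, the potential `V ≥ 0` is `C¹`,
coercive, with `|∇V|^{p₀} ≤ C_V(1+V)`, and `∫∫ |ρ_n| V` is uniformly bounded, then
`ρ_n ∇V ⇀ ρ ∇V` weakly in `L¹((0,T)×ℝ^d)`. -/
theorem weak_convergence_of_rho_nablaV
    (d : ℕ) (hd : 1 ≤ d) (T : ℝ) (hT : 0 < T)
    (p₀ C_V : ℝ) (hp₀ : 1 < p₀) (hCV : 1 ≤ C_V)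
    (V : EuclideanSpace ℝ (Fin d) → ℝ)
    (hV : ContDiff ℝ 1 V) (hV0 : ∀ x, 0 ≤ V x)
    (hgrad : ∀ x, ‖gradient V x‖ ^ p₀ ≤ C_V * (1 + V x))
    (hcoercive : Tendsto V (Filter.cocompact (EuclideanSpace ℝ (Fin d))) atTop)
    (μ : Measure (ℝ × EuclideanSpace ℝ (Fin d)))
    (hμ : μ = (volume.restrict (Set.Ioo (0 : ℝ) T)).prod volume)
    (ρn : ℕ → ℝ × EuclideanSpace ℝ (Fin d) → ℝ)
    (ρ : ℝ × EuclideanSpace ℝ (Fin d) → ℝ)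
    (hρn_int : ∀ n, Integrable (ρn n) μ) (hρ_int : Integrable ρ μ)
    -- (i) weak L¹ convergence
    (hweak : ∀ ψ : ℝ × EuclideanSpace ℝ (Fin d) → ℝ, Measurable ψ →
      (∃ M : ℝ, ∀ z, |ψ z| ≤ M) →
      Tendsto (fun n => ∫ z, ρn n z * ψ z ∂μ) atTop (nhds (∫ z, ρ z * ψ z ∂μ)))
    -- (ii) uniform bound on ∫∫ |ρ_n| V
    (hρnV_int : ∀ n, Integrable (fun z => |ρn n z| * V z.2) μ)
    (hρnV_bdd : ∃ M : ℝ, ∀ n, ∫ z, |ρn n z| * V z.2 ∂μ ≤ M)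
    (hρV_int : Integrable (fun z => |ρ z| * V z.2) μ)
    -- (iii) integrability of ρ_n ∇V and ρ ∇V
    (hρngrad_int : ∀ n, Integrable (fun z => ρn n z • gradient V z.2) μ)
    (hρgrad_int : Integrable (fun z => ρ z • gradient V z.2) μ) :
    ∀ ψ : ℝ × EuclideanSpace ℝ (Fin d) → EuclideanSpace ℝ (Fin d), Measurable ψ →
      (∃ M : ℝ, ∀ z, ‖ψ z‖ ≤ M) →
      Tendsto (fun n => ∫ z, ρn n z * inner ℝ (gradient V z.2) (ψ z) ∂μ) atTop
        (nhds (∫ z, ρ z * inner ℝ (gradient V z.2) (ψ z) ∂μ)) :=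
  weak_convergence_of_rho_nablaV_general d p₀ C_V hp₀ V hV0 hgrad μ ρn ρ hρn_int hρ_int hweak
    hρnV_int hρnV_bdd hρV_int hρngrad_int hρgrad_int
end

section
/- Let d ≥ 1, p₀ > 1, C_V ≥ 1, and let V : ℝ^d → [0,∞) be continuously differentiable with |∇V(x)|^{p₀} ≤ C_V(1+V(x)) for all x ∈ ℝ^d. Then there exists a constant C > 0 such that V(x+h) ≤ C·(1 + V(x) + |h|^{p₀/(p₀−1)}) for all x, h ∈ ℝ^d. In particular there exists C₀ > 0 such that V(x) ≤ C₀·(1+|x|^{p₀/(p₀−1)}) for all x ∈ ℝ^d. -/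
/-!
Put `α = 1 - 1/p₀`. The growth condition says exactly that `‖∇(1 + V)‖ ≤ C_V^{1/p₀} (1 + V)^{1 - α}`,
so the chain rule makes `(1 + V)^α` Lipschitz with constant `L = α C_V^{1/p₀}`. Hence
`(1 + V(x+h))^α ≤ (1 + V(x))^α + L‖h‖`, and raising to the power `1/α = p₀/(p₀-1)` with
`(a + b)^q ≤ 2^{q-1}(a^q + b^q)` gives the increment bound; taking `x = 0` gives the growth bound.
-/

open Real

lemma Real.rpow_add_le_mul_rpow_add_rpow {a b p : ℝ} (ha : 0 ≤ a) (hb : 0 ≤ b) (hp : 1 ≤ p) :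
    (a + b) ^ p ≤ 2 ^ (p - 1) * (a ^ p + b ^ p) := by
  lift a to NNReal using ha
  lift b to NNReal using hb
  exact_mod_cast NNReal.rpow_add_le_mul_rpow_add_rpow a b hp

lemma rpow_le_of_rpow_inv_le_add {w a b q : ℝ} (hw : 0 ≤ w) (ha : 0 ≤ a) (hb : 0 ≤ b)
    (hq : 1 ≤ q) (h : w ^ q⁻¹ ≤ a ^ q⁻¹ + b) : w ≤ 2 ^ (q - 1) * (a + b ^ q) := by
  have hq0 : q ≠ 0 := by positivity
  calc w = (w ^ q⁻¹) ^ q := (rpow_inv_rpow hw hq0).symm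
    _ ≤ (a ^ q⁻¹ + b) ^ q := by gcongr
    _ ≤ 2 ^ (q - 1) * ((a ^ q⁻¹) ^ q + b ^ q) :=
      Real.rpow_add_le_mul_rpow_add_rpow (by positivity) hb hq
    _ = 2 ^ (q - 1) * (a + b ^ q) := by rw [rpow_inv_rpow ha hq0]

theorem InnerProductSpace.norm_gradient {F : Type*} [NormedAddCommGroup F]
    [InnerProductSpace ℝ F] [CompleteSpace F] (f : F → ℝ) (x : F) :
    ‖gradient f x‖ = ‖fderiv ℝ f x‖ :=
  (toDual ℝ F).symm.norm_map _

section

variable {E : Type*} [NormedAddCommGroup E] [NormedSpace ℝ E]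

theorem norm_rpow_sub_rpow_le_of_norm_fderiv_le {u : E → ℝ} {α L : ℝ}
    (hu : Differentiable ℝ u) (hpos : ∀ x, 0 < u x) (hα : 0 ≤ α)
    (hbound : ∀ x, ‖fderiv ℝ u x‖ ≤ L * u x ^ (1 - α)) (x y : E) :
    ‖u y ^ α - u x ^ α‖ ≤ α * L * ‖y - x‖ := by
  have hderiv : ∀ z, HasFDerivAt (fun z => u z ^ α) ((α * u z ^ (α - 1)) • fderiv ℝ u z) z :=
    fun z => (hu z).hasFDerivAt.rpow_const (Or.inl (hpos z).ne')
  refine convex_univ.norm_image_sub_le_of_norm_hasFDerivWithin_le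
    (fun z _ => (hderiv z).hasFDerivWithinAt) (fun z _ => ?_) trivial trivial
  have huz := hpos z
  calc ‖(α * u z ^ (α - 1)) • fderiv ℝ u z‖ = α * u z ^ (α - 1) * ‖fderiv ℝ u z‖ := by
        rw [norm_smul, Real.norm_of_nonneg (by positivity)]
    _ ≤ α * u z ^ (α - 1) * (L * u z ^ (1 - α)) := by gcongr; exact hbound z
    _ = α * L * (u z ^ (α - 1) * u z ^ (1 - α)) := by ring
    _ = α * L := by rw [← rpow_add huz]; simp

theorem exists_le_mul_one_add_add_norm_rpow_of_norm_fderiv_rpow_le {V : E → ℝ} {p q K : ℝ}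
    (hV : Differentiable ℝ V) (hV0 : ∀ x, 0 ≤ V x) (hpq : p.HolderConjugate q) (hK : 0 ≤ K)
    (hgrad : ∀ x, ‖fderiv ℝ V x‖ ^ p ≤ K * (1 + V x)) :
    ∃ C > 0, ∀ x h, V (x + h) ≤ C * (1 + V x + ‖h‖ ^ q) := by
  have hp := hpq.pos
  have hq := hpq.symm.lt
  set L := K ^ p⁻¹
  set M := (q⁻¹ * L) ^ q
  have hpos : ∀ x, 0 < 1 + V x := fun x => by linarith [hV0 x]
  have hbound : ∀ x, ‖fderiv ℝ (fun y => 1 + V y) x‖ ≤ L * (1 + V x) ^ (1 - q⁻¹) := by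
    intro x
    have := hV0 x
    rw [fderiv_const_add, hpq.symm.one_sub_inv, ← mul_rpow hK (hpos x).le,
      ← rpow_le_rpow_iff (norm_nonneg _) (by positivity) hp, rpow_inv_rpow (by positivity) hp.ne']
    exact hgrad x
  refine ⟨2 ^ (q - 1) * (1 + M), by positivity, fun x h => ?_⟩
  have hlip := le_of_abs_le <| norm_rpow_sub_rpow_le_of_norm_fderiv_le (hV.const_add 1) hpos
    (by positivity) hbound x (x + h)
  rw [add_sub_cancel_left] at hlip
  have hstep := rpow_le_of_rpow_inv_le_add (b := q⁻¹ * L * ‖h‖) (hpos (x + h)).le (hpos x).le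
    (by positivity) hq.le (by linarith)
  rw [mul_rpow (by positivity) (norm_nonneg h)] at hstep
  have hhq : 0 ≤ ‖h‖ ^ q := by positivity
  calc V (x + h) ≤ 2 ^ (q - 1) * (1 + V x + M * ‖h‖ ^ q) := by linarith
    _ ≤ 2 ^ (q - 1) * (1 + M) * (1 + V x + ‖h‖ ^ q) := by
      rw [mul_assoc]
      gcongr
      nlinarith [hV0 x, mul_nonneg (show 0 ≤ M by positivity) (hpos x).le]

end

theorem polynomial_growth_of_potential_general
    (d : ℕ) (p₀ C_V : ℝ) (hp₀ : 1 < p₀) (hCV : 1 ≤ C_V)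
    (V : EuclideanSpace ℝ (Fin d) → ℝ)
    (hV : ContDiff ℝ 1 V) (hV0 : ∀ x, 0 ≤ V x)
    (hgrad : ∀ x, ‖gradient V x‖ ^ p₀ ≤ C_V * (1 + V x)) :
    (∃ C > (0 : ℝ), ∀ x h : EuclideanSpace ℝ (Fin d),
      V (x + h) ≤ C * (1 + V x + ‖h‖ ^ (p₀ / (p₀ - 1)))) ∧
    (∃ C₀ > (0 : ℝ), ∀ x : EuclideanSpace ℝ (Fin d),
      V x ≤ C₀ * (1 + ‖x‖ ^ (p₀ / (p₀ - 1)))) := by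
  obtain ⟨C, hC, hinc⟩ := exists_le_mul_one_add_add_norm_rpow_of_norm_fderiv_rpow_le
    (hV.differentiable one_ne_zero) hV0 (HolderConjugate.conjExponent hp₀) (by linarith)
    (fun x => InnerProductSpace.norm_gradient V x ▸ hgrad x)
  refine ⟨⟨C, hC, hinc⟩, C * (1 + V 0), by positivity [hV0 0], fun x => ?_⟩
  have hxq : 0 ≤ ‖x‖ ^ (p₀ / (p₀ - 1)) := by positivity
  calc V x = V (0 + x) := by rw [zero_add]
    _ ≤ C * (1 + V 0 + ‖x‖ ^ (p₀ / (p₀ - 1))) := hinc 0 x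
    _ ≤ C * (1 + V 0) * (1 + ‖x‖ ^ (p₀ / (p₀ - 1))) := by
      rw [mul_assoc]
      gcongr
      nlinarith [mul_nonneg (hV0 0) hxq]

/-- Remark 2.3: if `V ≥ 0` is `C¹` with `|∇V|^{p₀} ≤ C_V(1+V)`, then
`V(x+h) ≤ C(1+V(x)+|h|^{p₀/(p₀-1)})` and in particular `V` has polynomial growth
`V(x) ≤ C₀(1+|x|^{p₀/(p₀-1)})`. -/
theorem polynomial_growth_of_potential
    (d : ℕ) (hd : 1 ≤ d) (p₀ C_V : ℝ) (hp₀ : 1 < p₀) (hCV : 1 ≤ C_V)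
    (V : EuclideanSpace ℝ (Fin d) → ℝ)
    (hV : ContDiff ℝ 1 V) (hV0 : ∀ x, 0 ≤ V x)
    (hgrad : ∀ x, ‖gradient V x‖ ^ p₀ ≤ C_V * (1 + V x)) :
    (∃ C > (0 : ℝ), ∀ x h : EuclideanSpace ℝ (Fin d),
      V (x + h) ≤ C * (1 + V x + ‖h‖ ^ (p₀ / (p₀ - 1)))) ∧
    (∃ C₀ > (0 : ℝ), ∀ x : EuclideanSpace ℝ (Fin d),
      V x ≤ C₀ * (1 + ‖x‖ ^ (p₀ / (p₀ - 1)))) :=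
  polynomial_growth_of_potential_general d p₀ C_V hp₀ hCV V hV hV0 hgrad
end

section
/- Let d ≥ 1, D₀ ≥ 1, D₁ ≥ 1, and let ζ : ℝ^d → ℝ be uniformly continuous with 1/D₀ ≤ ζ(x) ≤ D₁ for all x ∈ ℝ^d. Let g : ℝ^d → ℝ be bounded and measurable with ∫_{ℝ^d} √(1+|z|²)·|g(z)| dz < ∞. For σ ∈ (0,1) define h_σ(x) := ζ(σx)/√(1+σ²|x|²). Then lim_{σ→0⁺} sup_{η∈ℝ^d} ∫_{ℝ^d} |h_σ(ξ)/h_σ(η) − 1|·|g(ξ−η)| dξ = 0, and likewise lim_{σ→0⁺} sup_{ξ∈ℝ^d} ∫_{ℝ^d} |h_σ(ξ)/h_σ(η) − 1|·|g(ξ−η)| dη = 0. -/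
open MeasureTheory

open Filter
set_option maxHeartbeats 1000000

lemma sqrt_one_add_sq_lipschitz (u v : ℝ) (hu : 0 ≤ u) (hv : 0 ≤ v) :
    |Real.sqrt (1 + u ^ 2) - Real.sqrt (1 + v ^ 2)| ≤ |u - v| := by
  have h1 : (0:ℝ) ≤ 1 + u ^ 2 := by positivity
  have h2 : (0:ℝ) ≤ 1 + v ^ 2 := by positivity
  set p := Real.sqrt (1 + u ^ 2) with hp
  set q := Real.sqrt (1 + v ^ 2) with hq
  have hp2 : p ^ 2 = 1 + u ^ 2 := Real.sq_sqrt h1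
  have hq2 : q ^ 2 = 1 + v ^ 2 := Real.sq_sqrt h2
  have hkey : 1 + u * v ≤ p * q := by
    rw [hp, hq, ← Real.sqrt_mul h1]
    rw [Real.le_sqrt (by positivity) (by positivity)]
    nlinarith [sq_nonneg (u - v)]
  have hsq : (p - q) ^ 2 ≤ (u - v) ^ 2 := by nlinarith
  calc |p - q| = Real.sqrt ((p - q) ^ 2) := (Real.sqrt_sq_eq_abs _).symm
    _ ≤ Real.sqrt ((u - v) ^ 2) := Real.sqrt_le_sqrt hsq
    _ = |u - v| := Real.sqrt_sq_eq_abs _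

lemma ratio_est (D₀ σ a b xn yn zn : ℝ) (hD₀ : 1 ≤ D₀) (hσ0 : 0 < σ) (hσ1 : σ ≤ 1)
    (ha : 1 / D₀ ≤ a) (hb : 1 / D₀ ≤ b)
    (hx : 0 ≤ xn) (hy : 0 ≤ yn) (hz : 0 ≤ zn) (htri : |yn - xn| ≤ zn) :
    |(a / Real.sqrt (1 + σ ^ 2 * xn ^ 2)) / (b / Real.sqrt (1 + σ ^ 2 * yn ^ 2)) - 1|
      ≤ D₀ * |a - b| * (1 + zn) + σ * zn := by
  have hD0pos : (0:ℝ) < D₀ := lt_of_lt_of_le one_pos hD₀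
  have hbpos : 0 < b := lt_of_lt_of_le (by positivity) hb
  set p := Real.sqrt (1 + σ ^ 2 * xn ^ 2) with hpdef
  set q := Real.sqrt (1 + σ ^ 2 * yn ^ 2) with hqdef
  have hp1 : 1 ≤ p := by
    rw [hpdef]
    exact (Real.le_sqrt zero_le_one (by positivity)).mpr (by nlinarith)
  have hq1 : 1 ≤ q := by
    rw [hqdef]
    exact (Real.le_sqrt zero_le_one (by positivity)).mpr (by nlinarith)
  have hqp : |q - p| ≤ σ * zn := by
    have e1 : (1 : ℝ) + σ ^ 2 * yn ^ 2 = 1 + (σ * yn) ^ 2 := by ring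
    have e2 : (1 : ℝ) + σ ^ 2 * xn ^ 2 = 1 + (σ * xn) ^ 2 := by ring
    rw [hqdef, hpdef, e1, e2]
    calc |Real.sqrt (1 + (σ * yn) ^ 2) - Real.sqrt (1 + (σ * xn) ^ 2)|
        ≤ |σ * yn - σ * xn| := sqrt_one_add_sq_lipschitz _ _ (by positivity) (by positivity)
      _ = σ * |yn - xn| := by rw [← mul_sub, abs_mul, abs_of_pos hσ0]
      _ ≤ σ * zn := by nlinarith
  have hp0 : 0 < p := lt_of_lt_of_le one_pos hp1
  have hq0 : 0 < q := lt_of_lt_of_le one_pos hq1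
  have hqle : q ≤ p * (1 + zn) := by
    have h1 : q - p ≤ σ * zn := (abs_le.mp hqp).2
    nlinarith
  have hid : a / p / (b / q) - 1 = (a - b) / b * (q / p) + (q - p) / p := by
    field_simp
    ring
  rw [hid]
  have h1 : |(a - b) / b * (q / p)| ≤ D₀ * |a - b| * (1 + zn) := by
    rw [abs_mul, abs_div, abs_of_pos hbpos, abs_of_pos (div_pos hq0 hp0)]
    have hbinv : 1 / b ≤ D₀ := by
      rw [div_le_iff₀ hbpos]
      have := (div_le_iff₀ hD0pos).mp hb
      linarith
    have hqp' : q / p ≤ 1 + zn := by rw [div_le_iff₀ hp0]; nlinarith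
    have : |a - b| / b = |a - b| * (1 / b) := by ring
    rw [this]
    have h0 : 0 ≤ |a - b| := abs_nonneg _
    have hr0 : 0 ≤ q / p := le_of_lt (div_pos hq0 hp0)
    calc |a - b| * (1 / b) * (q / p) ≤ |a - b| * D₀ * (q / p) :=
          mul_le_mul_of_nonneg_right (mul_le_mul_of_nonneg_left hbinv h0) hr0
      _ ≤ |a - b| * D₀ * (1 + zn) :=
          mul_le_mul_of_nonneg_left hqp' (by positivity)
      _ = D₀ * |a - b| * (1 + zn) := by ring
  have h2 : |(q - p) / p| ≤ σ * zn := by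
    rw [abs_div, abs_of_pos hp0]
    calc |q - p| / p ≤ |q - p| := div_le_self (abs_nonneg _) hp1
      _ ≤ σ * zn := hqp
  calc |(a - b) / b * (q / p) + (q - p) / p| ≤ |(a - b) / b * (q / p)| + |(q - p) / p| := abs_add_le _ _
    _ ≤ D₀ * |a - b| * (1 + zn) + σ * zn := add_le_add h1 h2

lemma combine_bound (D₀ D₁ ε₂ σ c n G r ind W : ℝ)
    (hD₀ : 1 ≤ D₀) (hD₁ : 1 ≤ D₁) (hε₂ : 0 ≤ ε₂) (hσ0 : 0 ≤ σ)
    (hc : 0 ≤ c) (hn : 0 ≤ n) (hG : 0 ≤ G) (hr1 : 1 ≤ r) (hrn : n ≤ r)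
    (hind : 0 ≤ ind) (hW : W = r * G)
    (hcase : c ≤ ε₂ ∨ (c ≤ 2 * D₁ ∧ ind = W)) :
    (D₀ * c * (1 + n) + σ * n) * G ≤ 2 * D₀ * ε₂ * W + 4 * D₀ * D₁ * ind + σ * W := by
  subst hW
  have hr0 : (0:ℝ) ≤ r := by linarith
  have hcommon : σ * n * G ≤ σ * (r * G) := by
    have := mul_le_mul_of_nonneg_right hrn hG
    nlinarith
  rcases hcase with hcε | ⟨hcD, hie⟩
  · have h1 : c * (1 + n) ≤ ε₂ * (2 * r) :=
      mul_le_mul hcε (by linarith) (by linarith) hε₂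
    have h2 : D₀ * c * (1 + n) * G ≤ 2 * D₀ * ε₂ * (r * G) := by
      nlinarith [mul_le_mul_of_nonneg_right h1 (mul_nonneg (by linarith : (0:ℝ) ≤ D₀) hG)]
    have h3 : 0 ≤ 4 * D₀ * D₁ * ind := by positivity
    nlinarith
  · rw [hie]
    have h1 : c * (1 + n) ≤ 2 * D₁ * (2 * r) :=
      mul_le_mul hcD (by linarith) (by linarith) (by linarith)
    have h2 : D₀ * c * (1 + n) * G ≤ 4 * D₀ * D₁ * (r * G) := by
      nlinarith [mul_le_mul_of_nonneg_right h1 (mul_nonneg (by linarith : (0:ℝ) ≤ D₀) hG)]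
    have h3 : 0 ≤ 2 * D₀ * ε₂ * (r * G) := by positivity
    nlinarith


/-- Schur-test convergence (Steps 2–3 of Lemma 3.1): with `h_σ(x) = ζ(σx)/√(1+σ²|x|²)`,
`ζ` uniformly continuous and pinched between `1/D₀` and `D₁`, and `g` bounded with
`∫ √(1+|z|²)|g(z)| dz < ∞`, the quantities `sup_η ∫ |h_σ(ξ)/h_σ(η) − 1||g(ξ−η)| dξ`
and `sup_ξ ∫ |h_σ(ξ)/h_σ(η) − 1||g(ξ−η)| dη` vanish as `σ → 0⁺`. -/
theorem schur_kernel_ratio_convergence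
    (d : ℕ) (hd : 1 ≤ d) (D₀ D₁ : ℝ) (hD₀ : 1 ≤ D₀) (hD₁ : 1 ≤ D₁)
    (ζ : EuclideanSpace ℝ (Fin d) → ℝ)
    (hζuc : UniformContinuous ζ)
    (hζ : ∀ x, 1 / D₀ ≤ ζ x ∧ ζ x ≤ D₁)
    (g : EuclideanSpace ℝ (Fin d) → ℝ)
    (hgmeas : Measurable g) (hgbdd : ∃ M : ℝ, ∀ z, |g z| ≤ M)
    (hgint : Integrable (fun z => Real.sqrt (1 + ‖z‖ ^ 2) * |g z|)) :
    ∀ ε > (0 : ℝ), ∃ σstar ∈ Set.Ioo (0 : ℝ) 1, ∀ σ ∈ Set.Ioo (0 : ℝ) σstar,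
      (∀ η : EuclideanSpace ℝ (Fin d),
        (∫ ξ, |(ζ (σ • ξ) / Real.sqrt (1 + σ ^ 2 * ‖ξ‖ ^ 2)) /
            (ζ (σ • η) / Real.sqrt (1 + σ ^ 2 * ‖η‖ ^ 2)) - 1| * |g (ξ - η)|) ≤ ε) ∧
      (∀ ξ : EuclideanSpace ℝ (Fin d),
        (∫ η, |(ζ (σ • ξ) / Real.sqrt (1 + σ ^ 2 * ‖ξ‖ ^ 2)) /
            (ζ (σ • η) / Real.sqrt (1 + σ ^ 2 * ‖η‖ ^ 2)) - 1| * |g (ξ - η)|) ≤ ε) := by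
  intro ε hε
  set w : EuclideanSpace ℝ (Fin d) → ℝ := fun z => Real.sqrt (1 + ‖z‖ ^ 2) * |g z| with hwdef
  have hwint : Integrable w := hgint
  have hwnn : ∀ z, 0 ≤ w z := fun z => mul_nonneg (Real.sqrt_nonneg _) (abs_nonneg _)
  set I := ∫ z, w z with hIdef
  have hInn : 0 ≤ I := integral_nonneg hwnn
  -- uniform continuity modulus
  set ε₂ : ℝ := ε / (6 * D₀ * (I + 1)) with hε₂def
  have hε₂pos : 0 < ε₂ := by positivity
  obtain ⟨δ, hδ0, hδ⟩ := Metric.uniformContinuous_iff.mp hζuc ε₂ hε₂pos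
  -- tail estimate
  have htail : ∃ R : ℝ, 1 ≤ R ∧
      (∫ z in {z : EuclideanSpace ℝ (Fin d) | R < ‖z‖}, w z) ≤ ε / (12 * D₀ * D₁) := by
    have hSn : ∀ n : ℕ, MeasurableSet {z : EuclideanSpace ℝ (Fin d) | (n : ℝ) < ‖z‖} :=
      fun n => measurableSet_lt measurable_const measurable_norm
    have hDCT := tendsto_integral_of_dominated_convergence (μ := volume)
        (F := fun n : ℕ => ({z : EuclideanSpace ℝ (Fin d) | (n : ℝ) < ‖z‖}).indicator w)
        (f := fun _ => (0:ℝ)) w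
        (fun n => hwint.aestronglyMeasurable.indicator (hSn n))
        hwint
        (fun n => Filter.Eventually.of_forall fun z => by
          rw [Real.norm_eq_abs, abs_of_nonneg (Set.indicator_nonneg (fun x _ => hwnn x) z)]
          exact Set.indicator_le_self' (fun x _ => hwnn x) z)
        (Filter.Eventually.of_forall fun z => by
          have hev : ∀ᶠ n : ℕ in atTop,
              ({z : EuclideanSpace ℝ (Fin d) | (n : ℝ) < ‖z‖}).indicator w z = 0 := by
            filter_upwards [eventually_ge_atTop ⌈‖z‖⌉₊] with n hn
            apply Set.indicator_of_notMem
            simp only [Set.mem_setOf_eq, not_lt]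
            calc ‖z‖ ≤ (⌈‖z‖⌉₊ : ℝ) := Nat.le_ceil _
              _ ≤ (n : ℝ) := by exact_mod_cast hn
          exact Filter.Tendsto.congr' (Filter.EventuallyEq.symm hev) tendsto_const_nhds)
    rw [integral_zero] at hDCT
    have hev := (hDCT.eventually (gt_mem_nhds (show (0:ℝ) < ε / (12 * D₀ * D₁) by positivity))).and
      (eventually_ge_atTop 1)
    obtain ⟨n, hn1, hn2⟩ := hev.exists
    refine ⟨(n : ℝ), by exact_mod_cast hn2, ?_⟩
    rw [← integral_indicator (hSn n)]
    exact le_of_lt hn1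
  obtain ⟨R, hR1, hRtail⟩ := htail
  have hR0 : (0:ℝ) < R := lt_of_lt_of_le one_pos hR1
  -- choose σstar
  refine ⟨min (1/2) (min (δ / R) (ε / (3 * (I + 1)))), ⟨by positivity,
    lt_of_le_of_lt (min_le_left _ _) (by norm_num)⟩, ?_⟩
  rintro σ ⟨hσ0, hσs⟩
  have hσhalf : σ < 1/2 := lt_of_lt_of_le hσs (min_le_left _ _)
  have hσδR : σ < δ / R := lt_of_lt_of_le hσs (le_trans (min_le_right _ _) (min_le_left _ _))
  have hσε : σ < ε / (3 * (I + 1)) :=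
    lt_of_lt_of_le hσs (le_trans (min_le_right _ _) (min_le_right _ _))
  have hσ1 : σ ≤ 1 := by linarith
  set S : Set (EuclideanSpace ℝ (Fin d)) := {z | R < ‖z‖} with hSdef
  have hSmeas : MeasurableSet S := measurableSet_lt measurable_const measurable_norm
  set F : EuclideanSpace ℝ (Fin d) → ℝ :=
    fun z => 2 * D₀ * ε₂ * w z + 4 * D₀ * D₁ * S.indicator w z + σ * w z with hFdef
  have hFint : Integrable F :=
    ((hwint.const_mul _).add ((hwint.indicator hSmeas).const_mul _)).add (hwint.const_mul _)
  -- value of ∫ F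
  have hFval : (∫ z, F z) ≤ ε := by
    have hsplit : (∫ z, F z) = 2 * D₀ * ε₂ * I + 4 * D₀ * D₁ * (∫ z in S, w z) + σ * I := by
      have i1 : Integrable (fun z : EuclideanSpace ℝ (Fin d) =>
          2 * D₀ * ε₂ * w z + 4 * D₀ * D₁ * S.indicator w z) :=
        (hwint.const_mul _).add ((hwint.indicator hSmeas).const_mul _)
      have i2 : Integrable (fun z : EuclideanSpace ℝ (Fin d) => σ * w z) := hwint.const_mul _
      have i3 : Integrable (fun z : EuclideanSpace ℝ (Fin d) => 2 * D₀ * ε₂ * w z) :=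
        hwint.const_mul _
      have i4 : Integrable (fun z : EuclideanSpace ℝ (Fin d) =>
          4 * D₀ * D₁ * S.indicator w z) := (hwint.indicator hSmeas).const_mul _
      simp only [hFdef]
      rw [integral_add i1 i2, integral_add i3 i4,
        integral_const_mul, integral_const_mul, integral_const_mul, integral_indicator hSmeas]
    rw [hsplit]
    have hT0 : 0 ≤ ∫ z in S, w z := setIntegral_nonneg hSmeas (fun z _ => hwnn z)
    have k1 : 2 * D₀ * ε₂ * I ≤ ε / 3 := by
      have h6 : (0:ℝ) < 6 * D₀ * (I + 1) := by positivity
      have : ε₂ * (6 * D₀ * (I + 1)) = ε := by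
        rw [hε₂def]; field_simp
      nlinarith [mul_nonneg (le_of_lt hε₂pos) hInn, hε₂pos]
    have k2 : 4 * D₀ * D₁ * (∫ z in S, w z) ≤ ε / 3 := by
      have h12 : (0:ℝ) < 12 * D₀ * D₁ := by positivity
      rw [le_div_iff₀ h12] at hRtail
      nlinarith
    have k3 : σ * I ≤ ε / 3 := by
      have h3 : (0:ℝ) < 3 * (I + 1) := by positivity
      rw [lt_div_iff₀ h3] at hσε
      nlinarith
    linarith
  -- pointwise bound
  have key : ∀ ξ η : EuclideanSpace ℝ (Fin d),
      |(ζ (σ • ξ) / Real.sqrt (1 + σ ^ 2 * ‖ξ‖ ^ 2)) /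
          (ζ (σ • η) / Real.sqrt (1 + σ ^ 2 * ‖η‖ ^ 2)) - 1| * |g (ξ - η)| ≤ F (ξ - η) := by
    intro ξ η
    have htri : |‖η‖ - ‖ξ‖| ≤ ‖ξ - η‖ := by
      rw [show ξ - η = -(η - ξ) by abel, norm_neg]
      exact abs_norm_sub_norm_le η ξ
    have hbase := ratio_est D₀ σ (ζ (σ • ξ)) (ζ (σ • η)) ‖ξ‖ ‖η‖ ‖ξ - η‖ hD₀ hσ0 hσ1
      (hζ _).1 (hζ _).1 (norm_nonneg _) (norm_nonneg _) (norm_nonneg _) htri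
    refine le_trans (mul_le_mul_of_nonneg_right hbase (abs_nonneg _)) ?_
    simp only [hFdef]
    have hr1 : (1:ℝ) ≤ Real.sqrt (1 + ‖ξ - η‖ ^ 2) :=
      (Real.le_sqrt zero_le_one (by positivity)).mpr (by nlinarith [sq_nonneg ‖ξ - η‖])
    have hrn : ‖ξ - η‖ ≤ Real.sqrt (1 + ‖ξ - η‖ ^ 2) :=
      (Real.le_sqrt (norm_nonneg _) (by positivity)).mpr (by nlinarith)
    have hwz : w (ξ - η) = Real.sqrt (1 + ‖ξ - η‖ ^ 2) * |g (ξ - η)| := rfl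
    have hind : 0 ≤ S.indicator w (ξ - η) := Set.indicator_nonneg (fun x _ => hwnn x) _
    apply combine_bound D₀ D₁ ε₂ σ _ _ _ _ _ _ hD₀ hD₁ (le_of_lt hε₂pos) (le_of_lt hσ0)
      (abs_nonneg _) (norm_nonneg _) (abs_nonneg _) hr1 hrn hind hwz
    by_cases hcase : ‖ξ - η‖ ≤ R
    · left
      have hd : dist (σ • ξ) (σ • η) < δ := by
        have hdistζ : dist (σ • ξ) (σ • η) = σ * ‖ξ - η‖ := by
          rw [dist_eq_norm, ← smul_sub, norm_smul, Real.norm_eq_abs, abs_of_pos hσ0]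
        rw [hdistζ]
        calc σ * ‖ξ - η‖ ≤ σ * R := mul_le_mul_of_nonneg_left hcase (le_of_lt hσ0)
          _ < δ := by rw [lt_div_iff₀ hR0] at hσδR; linarith
      have := hδ hd
      rw [Real.dist_eq] at this
      exact le_of_lt this
    · right
      push_neg at hcase
      refine ⟨?_, ?_⟩
      · have h1 := (hζ (σ • ξ)).1
        have h2 := (hζ (σ • ξ)).2
        have h3 := (hζ (σ • η)).1
        have h4 := (hζ (σ • η)).2
        have hpos : (0:ℝ) < 1 / D₀ := by positivity
        rw [abs_le]
        constructor <;> nlinarith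
      · exact Set.indicator_of_mem (by exact hcase) w
  constructor
  · intro η
    calc (∫ ξ, |(ζ (σ • ξ) / Real.sqrt (1 + σ ^ 2 * ‖ξ‖ ^ 2)) /
            (ζ (σ • η) / Real.sqrt (1 + σ ^ 2 * ‖η‖ ^ 2)) - 1| * |g (ξ - η)|)
        ≤ ∫ ξ, F (ξ - η) :=
          integral_mono_of_nonneg
            (Filter.Eventually.of_forall fun ξ => by positivity)
            (hFint.comp_sub_right η)
            (Filter.Eventually.of_forall fun ξ => key ξ η)
      _ = ∫ z, F z := integral_sub_right_eq_self F η
      _ ≤ ε := hFval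
  · intro ξ
    calc (∫ η, |(ζ (σ • ξ) / Real.sqrt (1 + σ ^ 2 * ‖ξ‖ ^ 2)) /
            (ζ (σ • η) / Real.sqrt (1 + σ ^ 2 * ‖η‖ ^ 2)) - 1| * |g (ξ - η)|)
        ≤ ∫ η, F (ξ - η) :=
          integral_mono_of_nonneg
            (Filter.Eventually.of_forall fun η => by positivity)
            (hFint.comp_sub_left ξ)
            (Filter.Eventually.of_forall fun η => key ξ η)
      _ = ∫ z, F z := integral_sub_left_eq_self F volume ξ
      _ ≤ ε := hFval
end

section
/- Let d ≥ 1, p₀ > 1 with dual exponent p₀* := p₀/(p₀−1), and let C_V ≥ 1, C₀ ≥ 1. Let V : ℝ^d → [0,∞) be continuously differentiable with |∇V(x)|^{p₀} ≤ C_V·(1+V(x)) and V(x) ≤ C₀·(1+|x|^{p₀*}) for all x ∈ ℝ^d. Then there exists a constant C > 0, depending only on p₀, C_V and C₀, such that for every measurable ρ : ℝ^d → [0,∞), every measurable ω : ℝ^d → [0,∞), every σ > 0, and every x ∈ ℝ^d, one has ((ρ·|∇V|) ∗ ω_σ)(x) ≤ C·(1+|x|^{p₀*})·(ρ ∗ ω_σ)(x)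 + C·(ρ ∗ (|·|^{p₀*} ω_σ))(x), where all convolutions of nonnegative functions are understood as integrals with values in [0,∞]. -/
open MeasureTheory

/-- Step 1 of Lemma 4.3 (pointwise estimate):
`((ρ|∇V|) ∗ ω_σ)(x) ≤ C(1+|x|^{p₀*})(ρ ∗ ω_σ)(x) + C(ρ ∗ (|·|^{p₀*} ω_σ))(x)`,
with `C` depending only on `p₀`, `C_V`, `C₀`, and convolutions of nonnegative
functions understood as `[0,∞]`-valued integrals. -/
theorem pointwise_estimate_rho_gradV_convolution
    (d : ℕ) (hd : 1 ≤ d) (p₀ C_V C₀ : ℝ) (hp₀ : 1 < p₀) (hCV : 1 ≤ C_V) (hC₀ : 1 ≤ C₀)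
    (V : EuclideanSpace ℝ (Fin d) → ℝ)
    (hV : ContDiff ℝ 1 V) (hV0 : ∀ x, 0 ≤ V x)
    (hgrad : ∀ x, ‖gradient V x‖ ^ p₀ ≤ C_V * (1 + V x))
    (hgrowth : ∀ x, V x ≤ C₀ * (1 + ‖x‖ ^ (p₀ / (p₀ - 1)))) :
    ∃ C > (0 : ℝ), ∀ ρ ω : EuclideanSpace ℝ (Fin d) → ℝ,
      Measurable ρ → Measurable ω → (∀ x, 0 ≤ ρ x) → (∀ x, 0 ≤ ω x) →
      ∀ σ > (0 : ℝ), ∀ x : EuclideanSpace ℝ (Fin d),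
        (∫⁻ y, ENNReal.ofReal
            (ρ (x - y) * ‖gradient V (x - y)‖ * ((σ ^ d)⁻¹ * ω (σ⁻¹ • y)))) ≤
          ENNReal.ofReal (C * (1 + ‖x‖ ^ (p₀ / (p₀ - 1)))) *
              (∫⁻ y, ENNReal.ofReal (ρ (x - y) * ((σ ^ d)⁻¹ * ω (σ⁻¹ • y)))) +
            ENNReal.ofReal C *
              (∫⁻ y, ENNReal.ofReal
                (ρ (x - y) * (‖y‖ ^ (p₀ / (p₀ - 1)) * ((σ ^ d)⁻¹ * ω (σ⁻¹ • y))))) := by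
  have hCV0 : (0:ℝ) < C_V := lt_of_lt_of_le one_pos hCV
  have hC₀0 : (0:ℝ) < C₀ := lt_of_lt_of_le one_pos hC₀
  set q := p₀ / (p₀ - 1) with hqdef
  have hp1 : (0:ℝ) < p₀ - 1 := by linarith
  have hq0 : (0:ℝ) < q := div_pos (by linarith) hp1
  have h2q : (1:ℝ) ≤ (2:ℝ) ^ q := Real.one_le_rpow (by norm_num) hq0.le
  have h2q0 : (0:ℝ) < (2:ℝ) ^ q := by positivity
  set K := 3 * C_V * C₀ * (2:ℝ) ^ q with hK
  have hK0 : 0 < K := by positivity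
  refine ⟨K, hK0, ?_⟩
  intro ρ ω hρ hω hρ0 hω0 σ hσ x
  -- bound on the gradient
  have hgradb : ∀ z, ‖gradient V z‖ ≤ 3 * C_V * C₀ * (1 + ‖z‖ ^ q) := by
    intro z
    have h1 : ‖gradient V z‖ ≤ 1 + ‖gradient V z‖ ^ p₀ := by
      rcases le_total ‖gradient V z‖ 1 with h | h
      · have h0 : (0:ℝ) ≤ ‖gradient V z‖ ^ p₀ := Real.rpow_nonneg (norm_nonneg _) _
        linarith
      · have h2 := Real.rpow_le_rpow_of_exponent_le h hp₀.le
        rw [Real.rpow_one] at h2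
        linarith
    have h2 := hgrad z
    have h3 := hgrowth z
    have h4 : (0:ℝ) ≤ ‖z‖ ^ q := Real.rpow_nonneg (norm_nonneg _) _
    nlinarith [hV0 z, mul_nonneg hCV0.le h4, mul_nonneg (mul_nonneg hCV0.le hC₀0.le) h4]
  -- triangle inequality for rpow
  have hnorm : ∀ y : EuclideanSpace ℝ (Fin d),
      ‖x - y‖ ^ q ≤ (2:ℝ) ^ q * ‖x‖ ^ q + (2:ℝ) ^ q * ‖y‖ ^ q := by
    intro y
    have hmax0 : (0:ℝ) ≤ max ‖x‖ ‖y‖ := le_trans (norm_nonneg x) (le_max_left _ _)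
    calc ‖x - y‖ ^ q ≤ (‖x‖ + ‖y‖) ^ q :=
          Real.rpow_le_rpow (norm_nonneg _) (norm_sub_le _ _) hq0.le
      _ ≤ (2 * max ‖x‖ ‖y‖) ^ q := by
          apply Real.rpow_le_rpow (by positivity) _ hq0.le
          have := add_le_add (le_max_left ‖x‖ ‖y‖) (le_max_right ‖x‖ ‖y‖)
          linarith
      _ = (2:ℝ) ^ q * (max ‖x‖ ‖y‖) ^ q := Real.mul_rpow (by norm_num) hmax0
      _ ≤ (2:ℝ) ^ q * ‖x‖ ^ q + (2:ℝ) ^ q * ‖y‖ ^ q := by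
          rcases le_total ‖x‖ ‖y‖ with h | h
          · rw [max_eq_right h]
            have : (0:ℝ) ≤ ‖x‖ ^ q := Real.rpow_nonneg (norm_nonneg _) _
            nlinarith
          · rw [max_eq_left h]
            have : (0:ℝ) ≤ ‖y‖ ^ q := Real.rpow_nonneg (norm_nonneg _) _
            nlinarith
  have hx0 : (0:ℝ) ≤ ‖x‖ ^ q := Real.rpow_nonneg (norm_nonneg _) _
  -- combined pointwise bound
  have hpt : ∀ y : EuclideanSpace ℝ (Fin d),
      ρ (x - y) * ‖gradient V (x - y)‖ * ((σ ^ d)⁻¹ * ω (σ⁻¹ • y)) ≤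
        K * (1 + ‖x‖ ^ q) * (ρ (x - y) * ((σ ^ d)⁻¹ * ω (σ⁻¹ • y))) +
          K * (ρ (x - y) * (‖y‖ ^ q * ((σ ^ d)⁻¹ * ω (σ⁻¹ • y)))) := by
    intro y
    have hy0 : (0:ℝ) ≤ ‖y‖ ^ q := Real.rpow_nonneg (norm_nonneg _) _
    have hG : ‖gradient V (x - y)‖ ≤ K * (1 + ‖x‖ ^ q) + K * ‖y‖ ^ q := by
      have h1 := hgradb (x - y)
      have h2 := hnorm y
      rw [hK]
      nlinarith [mul_nonneg (mul_nonneg (mul_nonneg (by norm_num : (0:ℝ) ≤ 3) hCV0.le)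
        hC₀0.le) hx0]
    have hw0 : (0:ℝ) ≤ (σ ^ d)⁻¹ * ω (σ⁻¹ • y) := by
      have := hω0 (σ⁻¹ • y)
      positivity
    have hr0 := hρ0 (x - y)
    have := mul_le_mul_of_nonneg_right hG (mul_nonneg hr0 hw0)
    nlinarith [this]
  -- measurability
  have hmw : Measurable fun y : EuclideanSpace ℝ (Fin d) => (σ ^ d)⁻¹ * ω (σ⁻¹ • y) := by
    exact (hω.comp (measurable_const_smul σ⁻¹)).const_mul _
  have hmr : Measurable fun y : EuclideanSpace ℝ (Fin d) => ρ (x - y) := by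
    exact hρ.comp (measurable_const.sub measurable_id)
  have hm1 : Measurable fun y : EuclideanSpace ℝ (Fin d) =>
      ENNReal.ofReal (K * (1 + ‖x‖ ^ q) * (ρ (x - y) * ((σ ^ d)⁻¹ * ω (σ⁻¹ • y)))) := by
    exact ((hmr.mul hmw).const_mul _).ennreal_ofReal
  calc (∫⁻ y, ENNReal.ofReal
        (ρ (x - y) * ‖gradient V (x - y)‖ * ((σ ^ d)⁻¹ * ω (σ⁻¹ • y))))
      ≤ ∫⁻ y, (ENNReal.ofReal (K * (1 + ‖x‖ ^ q) * (ρ (x - y) * ((σ ^ d)⁻¹ * ω (σ⁻¹ • y)))) +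
          ENNReal.ofReal (K * (ρ (x - y) * (‖y‖ ^ q * ((σ ^ d)⁻¹ * ω (σ⁻¹ • y)))))) := by
        apply lintegral_mono
        intro y
        have hy0 : (0:ℝ) ≤ ‖y‖ ^ q := Real.rpow_nonneg (norm_nonneg _) _
        have hw0 : (0:ℝ) ≤ (σ ^ d)⁻¹ * ω (σ⁻¹ • y) := by
          have := hω0 (σ⁻¹ • y)
          positivity
        have hr0 := hρ0 (x - y)
        dsimp only
        rw [← ENNReal.ofReal_add (by positivity) (by positivity)]
        exact ENNReal.ofReal_le_ofReal (hpt y)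
    _ = (∫⁻ y, ENNReal.ofReal (K * (1 + ‖x‖ ^ q) * (ρ (x - y) * ((σ ^ d)⁻¹ * ω (σ⁻¹ • y))))) +
        (∫⁻ y, ENNReal.ofReal (K * (ρ (x - y) * (‖y‖ ^ q * ((σ ^ d)⁻¹ * ω (σ⁻¹ • y)))))) :=
      lintegral_add_left hm1 _
    _ = ENNReal.ofReal (K * (1 + ‖x‖ ^ q)) *
          (∫⁻ y, ENNReal.ofReal (ρ (x - y) * ((σ ^ d)⁻¹ * ω (σ⁻¹ • y)))) +
        ENNReal.ofReal K *
          (∫⁻ y, ENNReal.ofReal (ρ (x - y) * (‖y‖ ^ q * ((σ ^ d)⁻¹ * ω (σ⁻¹ • y))))) := by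
        congr 1
        · simp_rw [ENNReal.ofReal_mul (by positivity : (0:ℝ) ≤ K * (1 + ‖x‖ ^ q))]
          exact lintegral_const_mul' _ _ ENNReal.ofReal_ne_top
        · simp_rw [ENNReal.ofReal_mul hK0.le]
          exact lintegral_const_mul' _ _ ENNReal.ofReal_ne_top
end
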